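/- arXiv:1901.00491 — 4 statements merged into one kernel-verified Lean document; each statement's English description precedes it below -/
import Mathlib

section
/- For every real α > 0, the cubic polynomial f(t) = 4t³ − 3(2 + 1/α)t² + 1 has exactly one root in the interval [0,1]. -/
/-- For every real α > 0, the cubic f(t) = 4t³ − 3(2 + 1/α)t² + 1 has exactly one
root in the interval [0,1]. -/
theorem cubic_unique_root (α : ℝ) (hα : 0 < α) :
    ∃! t : ℝ, t ∈ Set.Icc (0:ℝ) 1 ∧ 4*t^3 - 3*(2 + 1/α)*t^2 + 1 = 0 := by
  set c : ℝ := 2 + 1/α with hcdef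
  have hc : (2:ℝ) < c := by
    have : 0 < 1/α := by positivity
    simp only [hcdef]; linarith
  -- strict antitonicity on [0,1]
  have hanti : ∀ x y : ℝ, x ∈ Set.Icc (0:ℝ) 1 → y ∈ Set.Icc (0:ℝ) 1 → x < y →
      4*y^3 - 3*c*y^2 + 1 < 4*x^3 - 3*c*x^2 + 1 := by
    rintro x y ⟨hx0, hx1⟩ ⟨hy0, hy1⟩ hxy
    have hy : 0 < y := lt_of_le_of_lt hx0 hxy
    have key : 0 < 3*c*(x+y) - 4*(x^2+x*y+y^2) := by
      nlinarith [mul_pos (sub_pos.2 hc) (by linarith : (0:ℝ) < x + y),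
        mul_nonneg hx0 (sub_nonneg.2 hy1), mul_nonneg hy0 (sub_nonneg.2 hx1),
        mul_nonneg hx0 (sub_nonneg.2 hx1), mul_nonneg hy0 (sub_nonneg.2 hy1)]
    nlinarith [mul_pos (sub_pos.2 hxy) key]
  -- existence via IVT
  have hcont : ContinuousOn (fun t : ℝ => 4*t^3 - 3*c*t^2 + 1) (Set.Icc 0 1) := by
    fun_prop
  have hmem : (0:ℝ) ∈ Set.Icc (4*(1:ℝ)^3 - 3*c*(1:ℝ)^2 + 1) (4*(0:ℝ)^3 - 3*c*(0:ℝ)^2 + 1) := by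
    constructor <;> nlinarith
  have hsub := intermediate_value_Icc' (zero_le_one) hcont
  obtain ⟨t, htI, htf⟩ := hsub hmem
  refine ⟨t, ⟨htI, htf⟩, ?_⟩
  rintro s ⟨hsI, hsf⟩
  rcases lt_trichotomy s t with h | h | h
  · have := hanti s t hsI htI h
    simp only at htf hsf
    linarith
  · exact h
  · have := hanti t s htI hsI h
    simp only at htf hsf
    linarith
end

section
/- Among all continuous functions u : [0,1] → ℝ for which there exist functions x₁, x₂ with x₁' = x₂, x₂' = u, x₁(0) = s₀, x₁(1) = s_f, x₂(0) = v₀, x₂(1) = v_f, the affine function u*(t) = λ̄₁t + c with λ̄₁ = −12(s_f − s₀) + 6(v₀ + v_f) and c = 6(s_f − s₀) − 2(2v₀ + v_f) minimizes the energy (1/2)∫₀¹ u(t)² dt. -/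
/-!
Integrating the dynamics twice shows that every feasible control has the moments
`∫₀¹ u = v_f - v₀` and `∫₀¹ (1 - t) u = s_f - s₀ - v₀`; the constants `λ̄₁, c` are exactly those
giving `u*` the same two moments. As `u*` is affine, `∫ u* u` depends on `u` only through these
moments, so `u*` is orthogonal to `u - u*` and `∫ u² = ∫ u*² + ∫ (u - u*)²`.
-/

open intervalIntegral Set

theorem integral_sub_mul_eq_of_hasDerivAt {a b : ℝ} {x₁ x₂ u : ℝ → ℝ} (hab : a ≤ b)
    (hx₁ : ∀ t ∈ Icc a b, HasDerivAt x₁ (x₂ t) t) (hx₂ : ∀ t ∈ Icc a b, HasDerivAt x₂ (u t) t)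
    (hu : IntervalIntegrable u MeasureTheory.volume a b) :
    ∫ t in a..b, (b - t) * u t = x₁ b - x₁ a - (b - a) * x₂ a := by
  rw [← uIcc_of_le hab] at hx₁ hx₂
  have hderiv : ∀ t ∈ uIcc a b,
      HasDerivAt (fun t => x₁ t + (b - t) * x₂ t) ((b - t) * u t) t := fun t ht =>
    ((hx₁ t ht).add (((hasDerivAt_id' t).const_sub b).mul (hx₂ t ht))).congr_deriv (by ring)
  rw [integral_eq_sub_of_hasDerivAt hderiv (hu.continuousOn_mul (by fun_prop))]
  ring

theorem integral_affine_mul {a b : ℝ} (lam c : ℝ) {u : ℝ → ℝ}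
    (hu : IntervalIntegrable u MeasureTheory.volume a b) :
    ∫ t in a..b, (lam * t + c) * u t
      = (lam * b + c) * (∫ t in a..b, u t) - lam * ∫ t in a..b, (b - t) * u t := by
  have hmoment : IntervalIntegrable (fun t => (b - t) * u t) MeasureTheory.volume a b :=
    hu.continuousOn_mul (by fun_prop)
  rw [← integral_const_mul, ← integral_const_mul,
    ← integral_sub (hu.const_mul _) (hmoment.const_mul _)]
  congr 1 with t
  ring

theorem integral_sq_le_of_integral_mul_eq {a b : ℝ} {f g : ℝ → ℝ} (hab : a ≤ b)
    (hf : Continuous f) (hg : Continuous g)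
    (h : ∫ t in a..b, g t * f t = ∫ t in a..b, g t * g t) :
    ∫ t in a..b, g t ^ 2 ≤ ∫ t in a..b, f t ^ 2 := by
  have hpythagoras :
      (∫ t in a..b, f t ^ 2) - ∫ t in a..b, g t ^ 2 = ∫ t in a..b, (f t - g t) ^ 2 := by
    have hexpand : ∀ t, (f t - g t) ^ 2 = f t ^ 2 - 2 * (g t * f t) + g t * g t := fun t => by ring
    simp only [hexpand]
    rw [integral_add, integral_sub, integral_const_mul, h]
    · simp only [sq]
      ring
    all_goals exact Continuous.intervalIntegrable (by fun_prop) _ _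
  have hnonneg : 0 ≤ ∫ t in a..b, (f t - g t) ^ 2 :=
    integral_nonneg hab fun t _ => sq_nonneg _
  linarith

theorem integral_affine_zero_one (lam c : ℝ) : ∫ t in (0:ℝ)..1, (lam * t + c) = lam / 2 + c := by
  rw [integral_add, integral_const_mul]
  · simp
    ring
  all_goals exact Continuous.intervalIntegrable (by fun_prop) _ _

theorem integral_one_sub_mul_affine_zero_one (lam c : ℝ) :
    ∫ t in (0:ℝ)..1, (1 - t) * (lam * t + c) = lam / 6 + c / 2 := by
  have hexpand : ∀ t : ℝ, (1 - t) * (lam * t + c) = (lam - c) * t - lam * t ^ 2 + c := fun t => by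
    ring
  simp only [hexpand]
  rw [integral_add, integral_sub, integral_const_mul, integral_const_mul]
  · simp
    ring
  all_goals exact Continuous.intervalIntegrable (by fun_prop) _ _

/-- The affine control u*(t) = λ̄₁ t + c minimizes the energy among all continuous
controls steering the double integrator from (s₀, v₀) to (sf, vf) on [0,1]. -/
theorem affine_control_minimizes_energy
    (s₀ sf v₀ vf : ℝ)
    (lam c : ℝ)
    (hlam : lam = -12*(sf - s₀) + 6*(v₀ + vf))
    (hc : c = 6*(sf - s₀) - 2*(2*v₀ + vf)) :
    ∀ u : ℝ → ℝ, Continuous u →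
      (∃ x₁ x₂ : ℝ → ℝ,
        (∀ t ∈ Set.Icc (0:ℝ) 1, HasDerivAt x₁ (x₂ t) t) ∧
        (∀ t ∈ Set.Icc (0:ℝ) 1, HasDerivAt x₂ (u t) t) ∧
        x₁ 0 = s₀ ∧ x₁ 1 = sf ∧ x₂ 0 = v₀ ∧ x₂ 1 = vf) →
      (1/2) * (∫ t in (0:ℝ)..1, (lam*t + c)^2) ≤ (1/2) * (∫ t in (0:ℝ)..1, (u t)^2) := by
  rintro u hu ⟨x₁, x₂, hx₁, hx₂, rfl, rfl, rfl, rfl⟩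
  have hmass : ∫ t in (0:ℝ)..1, u t = x₂ 1 - x₂ 0 :=
    integral_eq_sub_of_hasDerivAt (fun t ht => hx₂ t (uIcc_of_le (zero_le_one' ℝ) ▸ ht))
      (hu.intervalIntegrable 0 1)
  have hmoment : ∫ t in (0:ℝ)..1, (1 - t) * u t = x₁ 1 - x₁ 0 - x₂ 0 := by
    simpa using integral_sub_mul_eq_of_hasDerivAt zero_le_one hx₁ hx₂ (hu.intervalIntegrable 0 1)
  have hpairing : ∫ t in (0:ℝ)..1, (lam * t + c) * u t
      = ∫ t in (0:ℝ)..1, (lam * t + c) * (lam * t + c) := by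
    rw [integral_affine_mul lam c (hu.intervalIntegrable 0 1),
      integral_affine_mul lam c (Continuous.intervalIntegrable (by fun_prop) 0 1),
      hmass, hmoment, integral_affine_zero_one, integral_one_sub_mul_affine_zero_one, hlam, hc]
    ring
  gcongr
  exact integral_sq_le_of_integral_mul_eq zero_le_one hu (by fun_prop) hpairing
end

section
/- Let α > 0, t₁ ∈ (0,1/2) with 4t₁³ − 3(2 + 1/α)t₁² + 1 = 0, t₂ = 1 − t₁, λ̄₁ = 2α/t₁², u₁ = −(λ̄₁/2)(1 − 2t₁) − 1, u₃ = −(u₁ + 2), and u the piecewise linear control equal to u₁ on [0,t₁], u₁ + λ̄₁(t − t₁) on [t₁,t₂], u₃ on [t₂,1]. Then ∫₀¹ u(t) dt = −1 and ∫₀¹ (1 − t) u(t) dt = −1. -/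
/-!
On each of the intervals `[0, t₁]`, `[t₁, t₂]`, `[t₂, 1]` the control is affine, so both moments
are explicit polynomials in `t₁`, `λ̄₁`, `u₁`, `u₃`. The first one is `-1` identically once `u₁` and
`u₃` are substituted; the second one is `-1` exactly when `λ̄₁ (4 t₁³ - 6 t₁² + 1) = 6`, which is the
cubic equation for `t₁` multiplied by `α` and rewritten through `λ̄₁ = 2α / t₁²`.
-/

open intervalIntegral

theorem integral_quadratic (a b A B C : ℝ) :
    ∫ t in a..b, (A + B * t + C * t ^ 2) =
      A * (b - a) + B * (b ^ 2 - a ^ 2) / 2 + C * (b ^ 3 - a ^ 3) / 3 := by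
  have hA : IntervalIntegrable (fun _ => A) MeasureTheory.volume a b := intervalIntegrable_const
  have hB : IntervalIntegrable (fun t => B * t) MeasureTheory.volume a b :=
    intervalIntegrable_id.const_mul B
  have hC : IntervalIntegrable (fun t => C * t ^ 2) MeasureTheory.volume a b :=
    (intervalIntegrable_pow 2).const_mul C
  rw [integral_add (hA.add hB) hC, integral_add hA hB, integral_const, integral_const_mul,
    integral_const_mul, integral_id, integral_pow, smul_eq_mul]
  ring

theorem integral_eq_of_eq_quadratic (f : ℝ → ℝ) (A B C : ℝ)
    (hf : ∀ t, f t = A + B * t + C * t ^ 2) (a b : ℝ) :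
    ∫ t in a..b, f t = A * (b - a) + B * (b ^ 2 - a ^ 2) / 2 + C * (b ^ 3 - a ^ 3) / 3 := by
  simp only [hf, integral_quadratic]

section Piecewise

open MeasureTheory

variable {E : Type*} {μ : Measure ℝ} {f g : ℝ → E} {a b c : ℝ}

theorem ite_lt_ae_eq_left [NullSingletonClass μ] (hab : a ≤ b) :
    (fun t => if t < b then f t else g t) =ᵐ[μ.restrict (Set.uIoc a b)] f := by
  filter_upwards [ae_restrict_mem measurableSet_uIoc, ae_restrict_of_ae (Measure.ae_ne μ b)]
    with t ht htb
  rw [Set.uIoc_of_le hab] at ht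
  exact if_pos (lt_of_le_of_ne ht.2 htb)

theorem ite_lt_eqOn_right (hbc : b ≤ c) :
    Set.EqOn (fun t => if t < b then f t else g t) g (Set.uIoc b c) := by
  intro t ht
  rw [Set.uIoc_of_le hbc] at ht
  exact if_neg ht.1.not_gt

variable [NormedAddCommGroup E] [NullSingletonClass μ]

theorem IntervalIntegrable.ite_lt (hab : a ≤ b) (hbc : b ≤ c)
    (hf : IntervalIntegrable f μ a b) (hg : IntervalIntegrable g μ b c) :
    IntervalIntegrable (fun t => if t < b then f t else g t) μ a c :=
  (hf.congr_ae (ite_lt_ae_eq_left hab).symm).trans (hg.congr (ite_lt_eqOn_right hbc).symm)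

variable [NormedSpace ℝ E]

theorem integral_ite_lt (hab : a ≤ b) (hbc : b ≤ c)
    (hf : IntervalIntegrable f μ a b) (hg : IntervalIntegrable g μ b c) :
    ∫ t in a..c, (if t < b then f t else g t) ∂μ = (∫ t in a..b, f t ∂μ) + ∫ t in b..c, g t ∂μ := by
  rw [← integral_add_adjacent_intervals (hf.congr_ae (ite_lt_ae_eq_left hab).symm)
      (hg.congr (ite_lt_eqOn_right hbc).symm),
    integral_congr_ae_restrict (ite_lt_ae_eq_left hab),
    integral_congr_ae_restrict
      (ae_restrict_of_forall_mem measurableSet_uIoc (ite_lt_eqOn_right hbc))]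

theorem integral_ite_lt_ite_lt {h : ℝ → E} {d : ℝ} (hab : a ≤ b) (hbc : b ≤ c) (hcd : c ≤ d)
    (hf : IntervalIntegrable f μ a b) (hg : IntervalIntegrable g μ b c)
    (hh : IntervalIntegrable h μ c d) :
    ∫ t in a..d, (if t < b then f t else if t < c then g t else h t) ∂μ =
      (∫ t in a..b, f t ∂μ) + (∫ t in b..c, g t ∂μ) + ∫ t in c..d, h t ∂μ := by
  rw [integral_ite_lt hab (hbc.trans hcd) hf (hg.ite_lt hbc hcd hh),
    integral_ite_lt hbc hcd hg hh, add_assoc]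

end Piecewise

/-- Moment conditions for the candidate optimal control: ∫₀¹ u = −1 and ∫₀¹ (1−t)u = −1. -/
theorem candidate_control_moment_conditions
    (α t₁ : ℝ) (hα : 0 < α) (ht₁ : t₁ ∈ Set.Ioo (0:ℝ) (1/2))
    (hcubic : 4*t₁^3 - 3*(2 + 1/α)*t₁^2 + 1 = 0)
    (t₂ lam u₁ u₃ : ℝ)
    (ht₂ : t₂ = 1 - t₁)
    (hlam : lam = 2*α/t₁^2)
    (hu₁ : u₁ = -(lam/2)*(1 - 2*t₁) - 1)
    (hu₃ : u₃ = -(u₁ + 2))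
    (u : ℝ → ℝ)
    (hu : u = fun t => if t < t₁ then u₁ else if t < t₂ then u₁ + lam*(t - t₁) else u₃) :
    (∫ t in (0:ℝ)..1, u t) = -1 ∧ (∫ t in (0:ℝ)..1, (1 - t) * u t) = -1 := by
  obtain ⟨ht₁_pos, ht₁_lt⟩ := ht₁
  have hkey : lam * (4 * t₁ ^ 3 - 6 * t₁ ^ 2 + 1) = 6 := by
    rw [hlam]
    field_simp at hcubic ⊢
    linear_combination 2 * hcubic
  have h₀₁ : 0 ≤ t₁ := ht₁_pos.le
  have h₁₂ : t₁ ≤ t₂ := by linarith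
  have h₂₃ : t₂ ≤ 1 := by linarith
  have hcontInt {f : ℝ → ℝ} (hf : Continuous f) (a b : ℝ) :
      IntervalIntegrable f MeasureTheory.volume a b :=
    hf.intervalIntegrable a b
  subst hu
  simp only [mul_ite]
  rw [integral_ite_lt_ite_lt h₀₁ h₁₂ h₂₃ (hcontInt (by fun_prop) _ _) (hcontInt (by fun_prop) _ _)
      (hcontInt (by fun_prop) _ _),
    integral_ite_lt_ite_lt h₀₁ h₁₂ h₂₃ (hcontInt (by fun_prop) _ _) (hcontInt (by fun_prop) _ _)
      (hcontInt (by fun_prop) _ _),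
    integral_eq_of_eq_quadratic (fun t => u₁ + lam * (t - t₁)) (u₁ - lam * t₁) lam 0
      (fun t => by ring),
    integral_eq_of_eq_quadratic (fun t => (1 - t) * u₁) u₁ (-u₁) 0 (fun t => by ring),
    integral_eq_of_eq_quadratic (fun t => (1 - t) * (u₁ + lam * (t - t₁))) (u₁ - lam * t₁)
      (lam + lam * t₁ - u₁) (-lam) (fun t => by ring),
    integral_eq_of_eq_quadratic (fun t => (1 - t) * u₃) u₃ (-u₃) 0 (fun t => by ring),
    integral_const, integral_const, smul_eq_mul, smul_eq_mul]
  subst ht₂ hu₃ hu₁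
  constructor
  · ring
  · linear_combination (-1 / 12) * hkey
end

section
/- Let α > 0, and let t₁ ∈ (0,1/2) satisfy 4t₁³ − 3(2 + 1/α)t₁² + 1 = 0. Set λ̄₁ = 2α/t₁², u₁ = −(λ̄₁/2)(1 − 2t₁) − 1 and u₃ = −(u₁ + 2). Then the total variation u₃ − u₁ of the optimal control equals λ̄₁(1 − 2t₁) = (2α/t₁²)(1 − 2t₁), and this quantity is strictly less than 6 and tends to 4 as α → ∞. -/
open Filter

/-- The total variation u₃ − u₁ of the optimal control equals λ̄₁(1 − 2t₁)
= (2α/t₁²)(1 − 2t₁), is strictly less than 6, and tends to 4 as α → ∞. -/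
theorem optimal_tv_formula_and_limit
    (t₁ : ℝ → ℝ)
    (h : ∀ α : ℝ, 0 < α → t₁ α ∈ Set.Ioo (0:ℝ) (1/2) ∧
      4*(t₁ α)^3 - 3*(2 + 1/α)*(t₁ α)^2 + 1 = 0)
    (lam u₁ u₃ : ℝ → ℝ)
    (hlam : ∀ α, lam α = 2*α/(t₁ α)^2)
    (hu₁ : ∀ α, u₁ α = -(lam α/2)*(1 - 2*t₁ α) - 1)
    (hu₃ : ∀ α, u₃ α = -(u₁ α + 2)) :
    (∀ α : ℝ, 0 < α →
      u₃ α - u₁ α = lam α * (1 - 2*t₁ α) ∧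
      u₃ α - u₁ α = (2*α/(t₁ α)^2) * (1 - 2*t₁ α) ∧
      u₃ α - u₁ α < 6) ∧
    Filter.Tendsto (fun α => u₃ α - u₁ α) Filter.atTop (nhds 4) := by
  have hTV : ∀ α, u₃ α - u₁ α = lam α * (1 - 2*t₁ α) := by
    intro α; rw [hu₃, hu₁]; ring
  -- key algebraic facts for α > 0
  have key : ∀ α : ℝ, 0 < α →
      u₃ α - u₁ α = 6 / (1 + 2*t₁ α - 2*(t₁ α)^2) := by
    intro α hα
    obtain ⟨⟨ht0, ht2⟩, hc⟩ := h α hα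
    have hα0 : α ≠ 0 := ne_of_gt hα
    have ht0' : t₁ α ≠ 0 := ne_of_gt ht0
    have hcc : 3*(t₁ α)^2 = α*(4*(t₁ α)^3 - 6*(t₁ α)^2 + 1) := by
      field_simp at hc
      nlinarith [hc]
    have hpos : (0:ℝ) < 1 + 2*t₁ α - 2*(t₁ α)^2 := by nlinarith
    rw [hTV, hlam]
    field_simp
    nlinarith [hcc]
  have hlim_t : Tendsto t₁ atTop (nhds (1/2)) := by
    have hlb : Tendsto (fun α : ℝ => 1/2 - (3/8) * α⁻¹) atTop (nhds (1/2)) := by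
      have := (tendsto_inv_atTop_zero (𝕜 := ℝ)).const_mul (3/8)
      have h2 := (tendsto_const_nhds (x := (1/2 : ℝ)) (f := atTop)).sub this
      simpa using h2
    refine tendsto_of_tendsto_of_tendsto_of_le_of_le' hlb tendsto_const_nhds ?_ ?_
    · filter_upwards [eventually_gt_atTop (0:ℝ)] with α hα
      obtain ⟨⟨ht0, ht2⟩, hc⟩ := h α hα
      have hα0 : α ≠ 0 := ne_of_gt hα
      have hcc : 3*(t₁ α)^2 = α*(4*(t₁ α)^3 - 6*(t₁ α)^2 + 1) := by
        field_simp at hc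
        nlinarith [hc]
      have hkey : 4*α*(1 - 2*t₁ α) ≤ 3 := by
        nlinarith [hcc, mul_nonneg (mul_nonneg hα.le (by linarith : (0:ℝ) ≤ 1 - 2*t₁ α))
          (mul_nonneg (by linarith : (0:ℝ) ≤ 2*t₁ α) (by linarith : (0:ℝ) ≤ 1 - t₁ α)),
          mul_nonneg (by linarith : (0:ℝ) ≤ 1/2 - t₁ α) (by linarith : (0:ℝ) ≤ 1/2 + t₁ α)]
      have h8 : (0:ℝ) < 8*α := by linarith
      have h38 : (3:ℝ)/8 * α⁻¹ = 3/(8*α) := by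
        rw [inv_eq_one_div]; ring
      rw [h38, sub_le_iff_le_add, ← sub_le_iff_le_add', le_div_iff₀ h8]
      nlinarith [hkey]
    · filter_upwards [eventually_gt_atTop (0:ℝ)] with α hα
      exact le_of_lt (h α hα).1.2
  have hden : Tendsto (fun α => 1 + 2*t₁ α - 2*(t₁ α)^2) atTop (nhds (3/2)) := by
    have : Tendsto (fun α => 1 + 2*t₁ α - 2*(t₁ α)^2) atTop
        (nhds (1 + 2*(1/2) - 2*(1/2)^2)) := by
      exact ((tendsto_const_nhds.add (hlim_t.const_mul 2)).sub
        ((hlim_t.pow 2).const_mul 2))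
    norm_num at this
    convert this using 2 <;> ring
  constructor
  · intro α hα
    obtain ⟨⟨ht0, ht2⟩, hc⟩ := h α hα
    refine ⟨hTV α, by rw [hTV, hlam], ?_⟩
    rw [key α hα]
    have hpos : (0:ℝ) < 1 + 2*t₁ α - 2*(t₁ α)^2 := by nlinarith
    rw [div_lt_iff₀ hpos]
    nlinarith
  · have hlim : Tendsto (fun α => 6 / (1 + 2*t₁ α - 2*(t₁ α)^2)) atTop (nhds 4) := by
      have := (tendsto_const_nhds (x := (6:ℝ)) (f := atTop)).div hden (by norm_num)
      norm_num at this
      exact this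
    refine hlim.congr' ?_
    filter_upwards [eventually_gt_atTop (0:ℝ)] with α hα
    exact (key α hα).symm
end
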